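/- arXiv:2602.05025 — 3 statements merged into one kernel-verified Lean document; each statement's English description precedes it below -/
import Mathlib

section
/- Let I : ℝ → ℝ be a nonnegative measurable function vanishing on (−∞,0) with a := ∫₀^∞ I(u) du < 1, let T > 0, let g : [0,T] → ℝ be nonnegative and integrable, and let f : [0,T] → ℝ be nonnegative and integrable and satisfy f(t) ≤ g(t) + ∫₀^t I(t−s) f(s) ds for almost every t ∈ [0,T]. Then ∫₀^T f(t) dt ≤ (1/(1−a)) ∫₀^T g(s) ds. -/
/-!
Integrate the inequality over `[0,T]` and exchange the order of integration in the convolution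
term: for each `s`, the kernel `t ↦ I (t - s)` has mass at most `a` on `[0,T]`, so
`∫ f ≤ ∫ g + a ∫ f`, and `a < 1` lets one solve for `∫ f`. Working with `ℝ≥0∞`-valued integrals
makes Tonelli available without any integrability check on the convolution term.
-/

open MeasureTheory Set
open scoped ENNReal

theorem ofReal_integral_le_lintegral_ofReal {α : Type*} [MeasurableSpace α] {μ : Measure α}
    (f : α → ℝ) : ENNReal.ofReal (∫ x, f x ∂μ) ≤ ∫⁻ x, ENNReal.ofReal (f x) ∂μ := by
  by_cases hf : Integrable f μ
  · rw [integral_eq_lintegral_pos_part_sub_lintegral_neg_part hf]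
    calc ENNReal.ofReal ((∫⁻ x, ENNReal.ofReal (f x) ∂μ).toReal - _)
        ≤ ENNReal.ofReal (∫⁻ x, ENNReal.ofReal (f x) ∂μ).toReal :=
          ENNReal.ofReal_le_ofReal (sub_le_self _ ENNReal.toReal_nonneg)
      _ ≤ ∫⁻ x, ENNReal.ofReal (f x) ∂μ := ENNReal.ofReal_toReal_le
  · simp [integral_undef hf]

theorem ofReal_intervalIntegral_le_setLIntegral (f : ℝ → ℝ) {a b : ℝ} (hab : a ≤ b)
    {s : Set ℝ} (hs : Ioc a b ⊆ s) :
    ENNReal.ofReal (∫ x in a..b, f x) ≤ ∫⁻ x in s, ENNReal.ofReal (f x) := by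
  rw [intervalIntegral.integral_of_le hab]
  exact (ofReal_integral_le_lintegral_ofReal f).trans (lintegral_mono_set hs)

theorem ofReal_le_add_setLIntegral_of_le_add_intervalIntegral {I f g : ℝ → ℝ}
    (hI : ∀ u, 0 ≤ I u) {T t : ℝ} (ht : t ∈ Icc 0 T)
    (hft : f t ≤ g t + ∫ s in (0:ℝ)..t, I (t - s) * f s) :
    ENNReal.ofReal (f t) ≤
      ENNReal.ofReal (g t) + ∫⁻ s in Icc 0 T, ENNReal.ofReal (I (t - s)) * ENNReal.ofReal (f s) :=
  calc ENNReal.ofReal (f t)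
      ≤ ENNReal.ofReal (g t) + ENNReal.ofReal (∫ s in (0:ℝ)..t, I (t - s) * f s) :=
        (ENNReal.ofReal_le_ofReal hft).trans ENNReal.ofReal_add_le
    _ ≤ ENNReal.ofReal (g t) + ∫⁻ s in Icc 0 T, ENNReal.ofReal (I (t - s) * f s) :=
        add_le_add le_rfl (ofReal_intervalIntegral_le_setLIntegral _ ht.1
          (Ioc_subset_Icc_self.trans (Icc_subset_Icc_right ht.2)))
    _ = _ := by simp_rw [ENNReal.ofReal_mul (hI _)]

theorem lintegral_lintegral_mul_le {α β : Type*} [MeasurableSpace α] [MeasurableSpace β]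
    {μ : Measure α} {ν : Measure β} [SFinite μ] [SFinite ν]
    {K : β → α → ℝ≥0∞} (hK : Measurable (Function.uncurry K)) {φ : α → ℝ≥0∞}
    (hφ : AEMeasurable φ μ) {c : ℝ≥0∞} (hKc : ∀ s, ∫⁻ t, K t s ∂ν ≤ c) :
    ∫⁻ t, ∫⁻ s, K t s * φ s ∂μ ∂ν ≤ c * ∫⁻ s, φ s ∂μ := by
  calc ∫⁻ t, ∫⁻ s, K t s * φ s ∂μ ∂ν
      = ∫⁻ s, (∫⁻ t, K t s ∂ν) * φ s ∂μ := by
        rw [lintegral_lintegral_swap (hK.aemeasurable.mul hφ.comp_snd)]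
        exact lintegral_congr fun s => lintegral_mul_const _ hK.of_uncurry_right
    _ ≤ ∫⁻ s, c * φ s ∂μ := lintegral_mono fun s => mul_le_mul_left (hKc s) _
    _ = c * ∫⁻ s, φ s ∂μ := lintegral_const_mul'' c hφ

theorem setLIntegral_ofReal_comp_sub_le {I : ℝ → ℝ} (hI : ∀ u < 0, I u = 0)
    (hI_int : IntegrableOn I (Ioi 0)) (hI_nonneg : ∀ u, 0 ≤ I u) (s : ℝ) (S : Set ℝ) :
    ∫⁻ t in S, ENNReal.ofReal (I (t - s)) ≤ ENNReal.ofReal (∫ u in Ioi 0, I u) := by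
  have hsupp : Function.support (fun u => ENNReal.ofReal (I u)) ⊆ Ici 0 := fun u hu =>
    mem_Ici.2 (not_lt.1 fun hu' => hu (by simp [hI u hu']))
  calc ∫⁻ t in S, ENNReal.ofReal (I (t - s))
      ≤ ∫⁻ t, ENNReal.ofReal (I (t - s)) := setLIntegral_le_lintegral _ _
    _ = ∫⁻ u in Ici 0, ENNReal.ofReal (I u) := by
        rw [lintegral_sub_right_eq_self (fun u => ENNReal.ofReal (I u)) s,
          setLIntegral_eq_of_support_subset hsupp]
    _ = ENNReal.ofReal (∫ u in Ioi 0, I u) := by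
        rw [setLIntegral_congr Ioi_ae_eq_Ici.symm, ofReal_integral_eq_lintegral_ofReal hI_int
          (ae_of_all _ fun u => hI_nonneg u)]

theorem volterra_comparison_inequality_general
    (I : ℝ → ℝ) (hImeas : Measurable I) (hInn : ∀ u, 0 ≤ I u)
    (hIzero : ∀ u : ℝ, u < 0 → I u = 0)
    (hIint : IntegrableOn I (Ioi 0))
    (a : ℝ) (ha : a = ∫ u in Ioi (0:ℝ), I u) (ha1 : a < 1)
    (T : ℝ)
    (g f : ℝ → ℝ)
    (hgnn : ∀ t ∈ Icc (0:ℝ) T, 0 ≤ g t) (hgint : IntegrableOn g (Icc 0 T))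
    (hfnn : ∀ t ∈ Icc (0:ℝ) T, 0 ≤ f t) (hfint : IntegrableOn f (Icc 0 T))
    (hineq : ∀ᵐ t ∂(volume.restrict (Icc (0:ℝ) T)),
      f t ≤ g t + ∫ s in (0:ℝ)..t, I (t - s) * f s) :
    (∫ t in Icc (0:ℝ) T, f t) ≤ (1 / (1 - a)) * ∫ s in Icc (0:ℝ) T, g s := by
  set F := ∫ t in Icc (0:ℝ) T, f t
  set G := ∫ s in Icc (0:ℝ) T, g s
  have ha0 : 0 ≤ a := ha ▸ setIntegral_nonneg measurableSet_Ioi fun u _ => hInn u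
  have hF0 : 0 ≤ F := setIntegral_nonneg measurableSet_Icc hfnn
  have hG0 : 0 ≤ G := setIntegral_nonneg measurableSet_Icc hgnn
  have hpointwise : ∀ᵐ t ∂(volume.restrict (Icc (0:ℝ) T)), ENNReal.ofReal (f t) ≤
      ENNReal.ofReal (g t) + ∫⁻ s in Icc 0 T, ENNReal.ofReal (I (t - s)) * ENNReal.ofReal (f s) := by
    filter_upwards [hineq, ae_restrict_mem measurableSet_Icc] with t hft ht
    exact ofReal_le_add_setLIntegral_of_le_add_intervalIntegral hInn ht hft
  have hlintegral : ENNReal.ofReal F ≤ ENNReal.ofReal G + ENNReal.ofReal a * ENNReal.ofReal F := by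
    rw [ofReal_integral_eq_lintegral_ofReal hfint
        ((ae_restrict_iff' measurableSet_Icc).2 (ae_of_all _ hfnn)),
      ofReal_integral_eq_lintegral_ofReal hgint
        ((ae_restrict_iff' measurableSet_Icc).2 (ae_of_all _ hgnn))]
    refine (lintegral_mono_ae hpointwise).trans ?_
    rw [lintegral_add_left' hgint.aemeasurable.ennreal_ofReal]
    refine add_le_add le_rfl (lintegral_lintegral_mul_le ?_ hfint.aemeasurable.ennreal_ofReal
      fun s => ha ▸ setLIntegral_ofReal_comp_sub_le hIzero hIint hInn s _)
    exact (hImeas.comp measurable_sub).ennreal_ofReal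
  have hreal : F ≤ G + a * F := by
    rwa [← ENNReal.ofReal_mul ha0, ← ENNReal.ofReal_add hG0 (mul_nonneg ha0 hF0),
      ENNReal.ofReal_le_ofReal_iff (by positivity)] at hlintegral
  rw [one_div_mul_eq_div, le_div_iff₀ (sub_pos.2 ha1)]
  linarith

/-- Volterra renewal-comparison inequality: if `f ≤ g + I ⋆ f` a.e. on `[0,T]` with
nonnegative kernel `I` of total mass `a < 1`, then `∫₀ᵀ f ≤ (1/(1-a)) ∫₀ᵀ g`. -/
theorem volterra_comparison_inequality
    (I : ℝ → ℝ) (hImeas : Measurable I) (hInn : ∀ u, 0 ≤ I u)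
    (hIzero : ∀ u : ℝ, u < 0 → I u = 0)
    (hIint : IntegrableOn I (Ioi 0))
    (a : ℝ) (ha : a = ∫ u in Ioi (0:ℝ), I u) (ha1 : a < 1)
    (T : ℝ) (hT : 0 < T)
    (g f : ℝ → ℝ)
    (hgnn : ∀ t ∈ Icc (0:ℝ) T, 0 ≤ g t) (hgint : IntegrableOn g (Icc 0 T))
    (hfnn : ∀ t ∈ Icc (0:ℝ) T, 0 ≤ f t) (hfint : IntegrableOn f (Icc 0 T))
    (hineq : ∀ᵐ t ∂(volume.restrict (Icc (0:ℝ) T)),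
      f t ≤ g t + ∫ s in (0:ℝ)..t, I (t - s) * f s) :
    (∫ t in Icc (0:ℝ) T, f t) ≤ (1 / (1 - a)) * ∫ s in Icc (0:ℝ) T, g s :=
  volterra_comparison_inequality_general I hImeas hInn hIzero hIint a ha ha1 T g f hgnn hgint hfnn
    hfint hineq
end

section
/- Let T > 0 and Ŝ ≥ 0, and let Ĝ : [0,T] → [0,Ŝ] be continuous and nondecreasing with Ĝ(0) = 0 and Ĝ(T) = Ŝ. Define G : [0,Ŝ] → [0,T] by G(t) := inf{s ∈ [0,T] : Ĝ(s) > t}, with the convention inf ∅ = T. Then for every bounded measurable g : [0,T] → ℝ and every t ∈ [0,Ŝ], ∫_{[0,G(t)]} g(s) μ_Ĝ(ds) = ∫₀^t g(G(v)) dv, where μ_Ĝ is the Lebesgue–Stieltjes measure of Ĝ. -/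
/-!
By continuity, the generalized inverse `G` of `Ĝ` is a right inverse of `Ĝ` on `[Ĝ 0, Ĝ T]`, and
for `v` in that range the condition `G v ≤ a` lies between `v < Ĝ a` and `v ≤ Ĝ a`. Hence the image
of Lebesgue measure on `(Ĝ 0, t]` under `G` gives `Iic a` the mass `min t (Ĝ a) - Ĝ 0`, which is
also the `μ_Ĝ`-mass of `Iic a ∩ [0, G t]`. The two measures therefore agree, and the identity is
the change of variables formula for this image measure.
-/

open MeasureTheory Set Filter Topology

/-- The `∪ {T}` implements the convention `inf ∅ = T`. -/
noncomputable def genInv (f : ℝ → ℝ) (T u : ℝ) : ℝ :=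
  sInf ({s : ℝ | s ∈ Icc (0 : ℝ) T ∧ u < f s} ∪ {T})

namespace genInv

variable {f : ℝ → ℝ} {T u a : ℝ}

theorem bddBelow (f : ℝ → ℝ) (T u : ℝ) :
    BddBelow ({s : ℝ | s ∈ Icc (0 : ℝ) T ∧ u < f s} ∪ {T}) :=
  (bddBelow_Icc.mono fun _ hs => hs.1).union bddBelow_singleton

theorem le_right : genInv f T u ≤ T :=
  csInf_le (bddBelow f T u) (Or.inr rfl)

theorem le_of_lt_apply (ha : 0 ≤ a) (hua : u < f a) : genInv f T u ≤ a := by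
  rcases le_or_gt a T with haT | hTa
  · exact csInf_le (bddBelow f T u) (Or.inl ⟨⟨ha, haT⟩, hua⟩)
  · exact le_right.trans hTa.le

theorem monotone (f : ℝ → ℝ) (T : ℝ) : Monotone (genInv f T) := by
  intro u v huv
  refine csInf_le_csInf (bddBelow f T u) ⟨T, Or.inr rfl⟩ ?_
  rintro s (⟨hs, hvs⟩ | rfl)
  · exact Or.inl ⟨hs, huv.trans_lt hvs⟩
  · exact Or.inr rfl

theorem apply_le (hf : Monotone f) (hfc : Continuous f) (hu : f 0 ≤ u) :
    f (genInv f T u) ≤ u := by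
  have below : ∀ s ∈ Iio (genInv f T u), f s ≤ u := by
    intro s hs
    rcases lt_or_ge s 0 with hs0 | hs0
    · exact (hf hs0.le).trans hu
    · by_contra! hus
      exact hs.not_ge (le_of_lt_apply hs0 hus)
  exact le_of_tendsto (hfc.continuousAt.tendsto.mono_left nhdsWithin_le_nhds)
    (eventually_nhdsWithin_of_forall below)

theorem le_apply (hf : Monotone f) (hfc : Continuous f) (hu : u ≤ f T) :
    u ≤ f (genInv f T u) := by
  have above : ∀ s ∈ Ioi (genInv f T u), u ≤ f s := by
    intro s hs
    obtain ⟨a, ha, has⟩ := exists_lt_of_csInf_lt ⟨T, Or.inr rfl⟩ hs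
    rcases ha with ⟨-, hua⟩ | rfl
    · exact hua.le.trans (hf has.le)
    · exact hu.trans (hf has.le)
  exact ge_of_tendsto (hfc.continuousAt.tendsto.mono_left nhdsWithin_le_nhds)
    (eventually_nhdsWithin_of_forall above)

theorem apply_eq (hf : Monotone f) (hfc : Continuous f) (hu : u ∈ Icc (f 0) (f T)) :
    f (genInv f T u) = u :=
  (apply_le hf hfc hu.1).antisymm (le_apply hf hfc hu.2)

end genInv

theorem volume_eq_ofReal_of_Ioo_subset_of_subset_Ioc {A : Set ℝ} {a b : ℝ}
    (hlow : Ioo a b ⊆ A) (hup : A ⊆ Ioc a b) : volume A = ENNReal.ofReal (b - a) :=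
  le_antisymm ((measure_mono hup).trans_eq Real.volume_Ioc)
    (Real.volume_Ioo.symm.trans_le (measure_mono hlow))

theorem StieltjesFunction.map_genInv_volume_restrict {F : StieltjesFunction ℝ}
    (hF : Continuous F) {T t : ℝ} (ht : t ∈ Icc (F 0) (F T)) :
    (volume.restrict (Ioc (F 0) t)).map (genInv F T) =
      F.measure.restrict (Icc 0 (genInv F T t)) := by
  have hG := (genInv.monotone F T).measurable
  have : IsFiniteMeasure (volume.restrict (Ioc (F 0) t)) :=
    isFiniteMeasure_restrict.2 measure_Ioc_lt_top.ne
  refine Measure.ext_of_Iic _ _ fun a => ?_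
  have hIcc : Iic a ∩ Icc 0 (genInv F T t) = Icc 0 (min a (genInv F T t)) := by
    ext v
    simp only [mem_inter_iff, mem_Iic, mem_Icc, le_min_iff]
    tauto
  rw [Measure.map_apply hG measurableSet_Iic, Measure.restrict_apply (hG measurableSet_Iic),
    Measure.restrict_apply measurableSet_Iic, hIcc, F.measure_Icc,
    hF.continuousAt.continuousWithinAt.leftLim_eq, F.mono.map_min,
    genInv.apply_eq F.mono hF ht, min_comm]
  refine volume_eq_ofReal_of_Ioo_subset_of_subset_Ioc ?_ ?_
  · rintro v ⟨hv0, hv⟩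
    have hva : v < F a := hv.trans_le (min_le_right _ _)
    have ha : 0 ≤ a := by
      by_contra! ha
      exact (F.mono ha.le).not_gt (hv0.trans hva)
    exact ⟨genInv.le_of_lt_apply ha hva, hv0, hv.le.trans (min_le_left _ _)⟩
  · rintro v ⟨hva, hv0, hvt⟩
    refine ⟨hv0, le_min hvt ?_⟩
    calc v = F (genInv F T v) := (genInv.apply_eq F.mono hF ⟨hv0.le, hvt.trans ht.2⟩).symm
      _ ≤ F a := F.mono hva

theorem time_change_identity_general
    (T S : ℝ)
    (Ghat : StieltjesFunction ℝ) (hcont : Continuous Ghat)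
    (h0 : ∀ s : ℝ, s ≤ 0 → Ghat s = 0)
    (hend : ∀ s : ℝ, T ≤ s → Ghat s = S)
    (G : ℝ → ℝ)
    (hG : ∀ t, G t = sInf ({s : ℝ | s ∈ Icc (0:ℝ) T ∧ t < Ghat s} ∪ {T}))
    (g : ℝ → ℝ) (hgm : Measurable g)
    (t : ℝ) (ht : t ∈ Icc (0:ℝ) S) :
    (∫ s in Icc (0:ℝ) (G t), g s ∂Ghat.measure) = ∫ v in Ioc (0:ℝ) t, g (G v) := by
  obtain rfl : G = genInv Ghat T := funext hG
  have hGhat0 : Ghat 0 = 0 := h0 0 le_rfl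
  have ht' : t ∈ Icc (Ghat 0) (Ghat T) := by rwa [hGhat0, hend T le_rfl]
  rw [← Ghat.map_genInv_volume_restrict hcont ht', hGhat0,
    integral_map (genInv.monotone Ghat T).measurable.aemeasurable hgm.aestronglyMeasurable]

/-- Time-change identity (Lemma 4.7): for a continuous nondecreasing `Ĝ : [0,T] → [0,Ŝ]`
with `Ĝ(0) = 0`, `Ĝ(T) = Ŝ` (extended by `0` to the left and by `Ŝ` to the right and
viewed as a Stieltjes function), and its generalized inverse
`G(t) = inf {s ∈ [0,T] : Ĝ(s) > t}` (with `inf ∅ = T`), every bounded measurable `g`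
satisfies `∫_{[0,G(t)]} g dμ_Ĝ = ∫₀ᵗ g(G(v)) dv` for all `t ∈ [0,Ŝ]`. -/
theorem time_change_identity
    (T S : ℝ) (hT : 0 < T) (hS : 0 ≤ S)
    (Ghat : StieltjesFunction ℝ) (hcont : Continuous Ghat)
    (h0 : ∀ s : ℝ, s ≤ 0 → Ghat s = 0)
    (hend : ∀ s : ℝ, T ≤ s → Ghat s = S)
    (G : ℝ → ℝ)
    (hG : ∀ t, G t = sInf ({s : ℝ | s ∈ Icc (0:ℝ) T ∧ t < Ghat s} ∪ {T}))
    (g : ℝ → ℝ) (hgm : Measurable g) (C : ℝ) (hgb : ∀ s, |g s| ≤ C)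
    (t : ℝ) (ht : t ∈ Icc (0:ℝ) S) :
    (∫ s in Icc (0:ℝ) (G t), g s ∂Ghat.measure) = ∫ v in Ioc (0:ℝ) t, g (G v) :=
  time_change_identity_general T S Ghat hcont h0 hend G hG g hgm t ht
end

section
/- Let (Ω, 𝓕, P) be a probability space with a filtration (𝓕_i)_{i=0,…,N} for a horizon N ∈ ℕ, and let (Z_i)_{i=0,…,N} be an adapted process with each Z_i integrable. Define the Snell envelope (U_i) by U_N = Z_N and U_i = max(Z_i, E[U_{i+1} | 𝓕_i]) almost surely for 0 ≤ i < N. Then τ* := min{i ∈ {0,…,N} : U_i = Z_i} is a stopping time and E[Z_{τ*}] = E[U_0]; consequently E[U_0] = max over all stopping times τ with values in {0,…,N} of E[Z_τ], and the maximum is attained at τ*. -/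
/-!
Extended constantly after `N`, the Snell envelope `U` is a supermartingale dominating `Z`, so
optional stopping gives `E[Z_τ] ≤ E[U_τ] ≤ E[U_0]` for every stopping time `τ ≤ N`. Before `τ*`
the maximum in the recursion is attained by the continuation value, `U_i = E[U_{i+1} | 𝓕_i]`, so
the envelope stopped at `τ*` is a martingale and `E[Z_{τ*}] = E[U_{τ*}] = E[U_0]`.
-/

open MeasureTheory

namespace MeasureTheory

variable {Ω : Type*} {m0 : MeasurableSpace Ω} {μ : Measure Ω} {ℱ : Filtration ℕ m0}

theorem stronglyAdapted_comp_min {β : Type*} [TopologicalSpace β] {X : ℕ → Ω → β} {N : ℕ}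
    (hX : ∀ i ≤ N, StronglyMeasurable[ℱ i] (X i)) :
    StronglyAdapted ℱ fun i => X (min i N) :=
  fun i => (hX _ (min_le_right i N)).mono (ℱ.mono (min_le_left i N))

theorem stoppedValue_comp_min_of_le {β : Type*} (X : ℕ → Ω → β) {N : ℕ} {τ : Ω → ℕ}
    (hτ : ∀ ω, τ ω ≤ N) :
    stoppedValue (fun i => X (min i N)) (fun ω => (τ ω : WithTop ℕ)) = fun ω => X (τ ω) ω :=
  funext fun ω => congrArg (X · ω) (min_eq_left (hτ ω))

theorem Supermartingale.expected_stoppedValue_anti [SigmaFiniteFiltration μ ℱ]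
    {f : ℕ → Ω → ℝ} (hf : Supermartingale f ℱ μ) {τ π : Ω → WithTop ℕ}
    (hτ : IsStoppingTime ℱ τ) (hπ : IsStoppingTime ℱ π) (hle : τ ≤ π) {N : ℕ}
    (hbdd : ∀ ω, π ω ≤ N) : ∫ ω, stoppedValue f π ω ∂μ ≤ ∫ ω, stoppedValue f τ ω ∂μ := by
  simpa [integral_neg] using hf.neg.expected_stoppedValue_mono hτ hπ hle hbdd

theorem martingale_stoppedProcess_of_condExp_eq [IsFiniteMeasure μ] {V : ℕ → Ω → ℝ}
    {τ : Ω → WithTop ℕ} (hV : StronglyAdapted ℱ V) (hint : ∀ i, Integrable (V i) μ)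
    (hτ : IsStoppingTime ℱ τ)
    (hcond : ∀ i : ℕ, ∀ᵐ ω ∂μ, (i : WithTop ℕ) < τ ω → μ[V (i + 1) | ℱ i] ω = V i ω) :
    Martingale (stoppedProcess V τ) ℱ μ := by
  refine martingale_of_setIntegral_eq_succ (hV.stoppedProcess_of_discrete hτ)
    (integrable_stoppedProcess hτ hint) fun i s hs => ?_
  set A := {ω | (i : WithTop ℕ) < τ ω}
  have hA : MeasurableSet[ℱ i] A := hτ.measurableSet_gt i
  have hsA : MeasurableSet[ℱ i] (s ∩ A) := hs.inter hA
  have hincr : stoppedProcess V τ (i + 1)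
      = stoppedProcess V τ i + A.indicator (V (i + 1) - V i) := by
    funext ω
    rcases le_or_gt (τ ω) i with hτi | hiτ
    · have hτi' : τ ω ≤ ((i + 1 : ℕ) : WithTop ℕ) := hτi.trans (by exact_mod_cast i.le_succ)
      rw [Pi.add_apply, stoppedProcess_eq_of_ge (i := i) hτi,
        stoppedProcess_eq_of_ge (i := i + 1) hτi',
        Set.indicator_of_notMem (show ω ∉ A from hτi.not_gt), add_zero]
    · have hiτ' : ((i + 1 : ℕ) : WithTop ℕ) ≤ τ ω := Order.add_one_le_of_lt (α := ℕ∞) hiτ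
      rw [Pi.add_apply, stoppedProcess_eq_of_le (i := i) hiτ.le,
        stoppedProcess_eq_of_le (i := i + 1) hiτ', Set.indicator_of_mem (show ω ∈ A from hiτ),
        Pi.sub_apply, add_sub_cancel]
  have hfair : ∫ ω in s ∩ A, V (i + 1) ω ∂μ = ∫ ω in s ∩ A, V i ω ∂μ := by
    rw [← setIntegral_condExp (ℱ.le i) (hint _) hsA]
    refine setIntegral_congr_ae (ℱ.le i _ hsA) ?_
    filter_upwards [hcond i] with ω h hω using h hω.2
  have hAm : MeasurableSet A := ℱ.le i _ hA
  rw [hincr, Pi.add_def, integral_add (integrable_stoppedProcess hτ hint i).integrableOn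
      (((hint _).sub (hint _)).indicator hAm).integrableOn,
    setIntegral_indicator hAm, Pi.sub_def,
    integral_sub (hint _).integrableOn (hint _).integrableOn, hfair, sub_self, add_zero]

structure IsSnellEnvelope (μ : Measure Ω) (ℱ : Filtration ℕ m0) (N : ℕ) (Z U : ℕ → Ω → ℝ) :
    Prop where
  terminal : U N = Z N
  backward : ∀ i < N, U i = fun ω => max (Z i ω) (μ[U (i + 1) | ℱ i] ω)

noncomputable def snellStoppingTime (N : ℕ) (Z U : ℕ → Ω → ℝ) (ω : Ω) : ℕ :=
  sInf {i | i ≤ N ∧ U i ω = Z i ω}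

namespace IsSnellEnvelope

variable {N : ℕ} {Z U : ℕ → Ω → ℝ}

theorem payoff_le (hU : IsSnellEnvelope μ ℱ N Z U) {i : ℕ} (hi : i ≤ N) (ω : Ω) :
    Z i ω ≤ U i ω := by
  rcases hi.lt_or_eq with hi | rfl
  · rw [hU.backward i hi]
    exact le_max_left _ _
  · rw [hU.terminal]

theorem condExp_le (hU : IsSnellEnvelope μ ℱ N Z U) {i : ℕ} (hi : i < N) (ω : Ω) :
    μ[U (i + 1) | ℱ i] ω ≤ U i ω := by
  rw [hU.backward i hi]
  exact le_max_right _ _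

theorem condExp_eq_of_ne (hU : IsSnellEnvelope μ ℱ N Z U) {i : ℕ} (hi : i < N) {ω : Ω}
    (hne : U i ω ≠ Z i ω) : μ[U (i + 1) | ℱ i] ω = U i ω := by
  have hUi := congrFun (hU.backward i hi) ω
  rcases max_choice (Z i ω) (μ[U (i + 1) | ℱ i] ω) with h | h
  · exact absurd (hUi.trans h) hne
  · exact (hUi.trans h).symm

theorem stronglyMeasurable (hU : IsSnellEnvelope μ ℱ N Z U)
    (hZm : ∀ i ≤ N, StronglyMeasurable[ℱ i] (Z i)) {i : ℕ} (hi : i ≤ N) :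
    StronglyMeasurable[ℱ i] (U i) := by
  rcases hi.lt_or_eq with hi | rfl
  · rw [hU.backward i hi]
    have := hZm i hi.le
    fun_prop
  · rw [hU.terminal]
    exact hZm i le_rfl

theorem integrable (hU : IsSnellEnvelope μ ℱ N Z U) (hZi : ∀ i ≤ N, Integrable (Z i) μ) {i : ℕ}
    (hi : i ≤ N) : Integrable (U i) μ := by
  rcases hi.lt_or_eq with hi | rfl
  · rw [hU.backward i hi]
    exact (hZi i hi.le).sup integrable_condExp
  · rw [hU.terminal]
    exact hZi i le_rfl

theorem supermartingale [IsFiniteMeasure μ] (hU : IsSnellEnvelope μ ℱ N Z U)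
    (hZm : ∀ i ≤ N, StronglyMeasurable[ℱ i] (Z i)) (hZi : ∀ i ≤ N, Integrable (Z i) μ) :
    Supermartingale (fun i => U (min i N)) ℱ μ := by
  refine supermartingale_nat (stronglyAdapted_comp_min fun i hi => hU.stronglyMeasurable hZm hi)
    (fun i => hU.integrable hZi (min_le_right i N)) fun i => ?_
  rcases lt_or_ge i N with hi | hi
  · rw [min_eq_left hi.le, min_eq_left hi]
    exact ae_of_all _ (hU.condExp_le hi)
  · rw [min_eq_right hi, min_eq_right (hi.trans i.le_succ), condExp_of_stronglyMeasurable (ℱ.le i)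
      ((hU.stronglyMeasurable hZm le_rfl).mono (ℱ.mono hi)) (hU.integrable hZi le_rfl)]

theorem snellStoppingTime_le (hU : IsSnellEnvelope μ ℱ N Z U) (ω : Ω) :
    snellStoppingTime N Z U ω ≤ N :=
  Nat.sInf_le ⟨le_rfl, congrFun hU.terminal ω⟩

theorem eq_at_snellStoppingTime (hU : IsSnellEnvelope μ ℱ N Z U) (ω : Ω) :
    U (snellStoppingTime N Z U ω) ω = Z (snellStoppingTime N Z U ω) ω :=
  (Nat.sInf_mem (s := {i | i ≤ N ∧ U i ω = Z i ω}) ⟨N, le_rfl, congrFun hU.terminal ω⟩).2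

theorem ne_of_lt_snellStoppingTime (hU : IsSnellEnvelope μ ℱ N Z U) {i : ℕ} {ω : Ω}
    (hi : i < snellStoppingTime N Z U ω) : U i ω ≠ Z i ω := fun h =>
  Nat.notMem_of_lt_sInf (s := {i | i ≤ N ∧ U i ω = Z i ω}) hi
    (⟨(hi.trans_le (hU.snellStoppingTime_le ω)).le, h⟩ : i ≤ N ∧ U i ω = Z i ω)

theorem isStoppingTime_snellStoppingTime (hU : IsSnellEnvelope μ ℱ N Z U)
    (hZm : ∀ i ≤ N, StronglyMeasurable[ℱ i] (Z i)) :
    IsStoppingTime ℱ fun ω => (snellStoppingTime N Z U ω : WithTop ℕ) := by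
  have hadapted : Adapted ℱ fun i ω => U (min i N) ω - Z (min i N) ω :=
    ((stronglyAdapted_comp_min fun i hi => hU.stronglyMeasurable hZm hi).sub
      (stronglyAdapted_comp_min hZm)).adapted
  have hhit : snellStoppingTime N Z U
      = hittingBtwn (fun i ω => U (min i N) ω - Z (min i N) ω) {0} 0 N := by
    funext ω
    have hex : ∃ j ∈ Set.Icc 0 N, U (min j N) ω - Z (min j N) ω ∈ ({0} : Set ℝ) :=
      ⟨N, ⟨N.zero_le, le_rfl⟩, by simp [hU.terminal]⟩
    simp only [hittingBtwn_def, if_pos hex, snellStoppingTime]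
    congr 1
    ext i
    simp +contextual [sub_eq_zero]
  rw [hhit]
  exact hadapted.isStoppingTime_hittingBtwn (measurableSet_singleton 0)

theorem martingale_stoppedProcess [IsFiniteMeasure μ] (hU : IsSnellEnvelope μ ℱ N Z U)
    (hZm : ∀ i ≤ N, StronglyMeasurable[ℱ i] (Z i)) (hZi : ∀ i ≤ N, Integrable (Z i) μ) :
    Martingale (stoppedProcess (fun i => U (min i N))
      fun ω => (snellStoppingTime N Z U ω : WithTop ℕ)) ℱ μ := by
  refine martingale_stoppedProcess_of_condExp_eq
    (stronglyAdapted_comp_min fun i hi => hU.stronglyMeasurable hZm hi)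
    (fun i => hU.integrable hZi (min_le_right i N)) (hU.isStoppingTime_snellStoppingTime hZm)
    fun i => ae_of_all _ fun ω hi => ?_
  have hi : i < snellStoppingTime N Z U ω := by exact_mod_cast hi
  have hiN : i < N := hi.trans_le (hU.snellStoppingTime_le ω)
  rw [min_eq_left hiN, min_eq_left hiN.le]
  exact hU.condExp_eq_of_ne hiN (hU.ne_of_lt_snellStoppingTime hi)

theorem integral_snellStoppingTime [IsFiniteMeasure μ] (hU : IsSnellEnvelope μ ℱ N Z U)
    (hZm : ∀ i ≤ N, StronglyMeasurable[ℱ i] (Z i)) (hZi : ∀ i ≤ N, Integrable (Z i) μ) :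
    ∫ ω, Z (snellStoppingTime N Z U ω) ω ∂μ = ∫ ω, U 0 ω ∂μ := by
  set τ : Ω → WithTop ℕ := fun ω => (snellStoppingTime N Z U ω : WithTop ℕ)
  have h := (hU.martingale_stoppedProcess hZm hZi).setIntegral_eq (Nat.zero_le N)
    MeasurableSet.univ
  have h0 : stoppedProcess (fun i => U (min i N)) τ 0 = U 0 := by
    funext ω
    rw [stoppedProcess_eq_of_le (i := 0) bot_le, Nat.zero_min]
  have hN : stoppedProcess (fun i => U (min i N)) τ N =
      fun ω => Z (snellStoppingTime N Z U ω) ω := by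
    funext ω
    have hle : snellStoppingTime N Z U ω ≤ N := hU.snellStoppingTime_le ω
    rw [stoppedProcess_eq_of_ge (τ := τ) (i := N) (WithTop.coe_le_coe.2 hle)]
    exact (congrArg (U · ω) (min_eq_left hle)).trans (hU.eq_at_snellStoppingTime ω)
  rw [h0, hN, Measure.restrict_univ] at h
  exact h.symm

theorem integral_stoppedValue_le [IsFiniteMeasure μ] (hU : IsSnellEnvelope μ ℱ N Z U)
    (hZm : ∀ i ≤ N, StronglyMeasurable[ℱ i] (Z i)) (hZi : ∀ i ≤ N, Integrable (Z i) μ)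
    {τ : Ω → ℕ} (hτ : IsStoppingTime ℱ fun ω => (τ ω : WithTop ℕ)) (hτN : ∀ ω, τ ω ≤ N) :
    ∫ ω, Z (τ ω) ω ∂μ ≤ ∫ ω, U 0 ω ∂μ := by
  have hbdd : ∀ ω, (τ ω : WithTop ℕ) ≤ N := fun ω => by exact_mod_cast hτN ω
  calc ∫ ω, Z (τ ω) ω ∂μ ≤ ∫ ω, U (τ ω) ω ∂μ := by
        rw [← stoppedValue_comp_min_of_le Z hτN, ← stoppedValue_comp_min_of_le U hτN]
        exact integral_mono
          (integrable_stoppedValue ℕ hτ (fun i => hZi _ (min_le_right i N)) hbdd)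
          (integrable_stoppedValue ℕ hτ (fun i => hU.integrable hZi (min_le_right i N)) hbdd)
          fun ω => hU.payoff_le (min_le_right _ N) ω
    _ ≤ ∫ ω, U (min 0 N) ω ∂μ := by
        rw [← stoppedValue_comp_min_of_le U hτN]
        exact (hU.supermartingale hZm hZi).expected_stoppedValue_anti
          (isStoppingTime_const ℱ 0) hτ (fun ω => bot_le) hbdd
    _ = ∫ ω, U 0 ω ∂μ := by rw [Nat.zero_min]

end IsSnellEnvelope

end MeasureTheory

/-- Attainment half of the discrete-time dynamic programming principle with optimal
stopping (Theorem 3.3): if `U` is the Snell envelope of an adapted integrable process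
`Z` over the horizon `{0,…,N}` (`U_N = Z_N`, `U_i = max(Z_i, E[U_{i+1} | 𝓕_i])`), then
`τ* := min {i ∈ {0,…,N} : U_i = Z_i}` is a stopping time with `E[Z_{τ*}] = E[U_0]`,
and `E[U_0]` is the maximum of `E[Z_τ]` over all stopping times `τ` valued in
`{0,…,N}`; in particular the maximum is attained at `τ*`. -/
theorem snell_envelope_optimal_stopping
    {Ω : Type*} {m0 : MeasurableSpace Ω} (μ : Measure Ω) [IsProbabilityMeasure μ]
    (N : ℕ) (ℱ : Filtration ℕ m0)
    (Z : ℕ → Ω → ℝ)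
    (hadapt : ∀ i ≤ N, StronglyMeasurable[ℱ i] (Z i))
    (hint : ∀ i ≤ N, Integrable (Z i) μ)
    (U : ℕ → Ω → ℝ)
    (hUN : U N = Z N)
    (hUrec : ∀ i < N, U i = fun ω => max (Z i ω) ((μ[U (i + 1) | ℱ i]) ω))
    (τstar : Ω → ℕ)
    (hτstar : τstar = fun ω => sInf {i | i ≤ N ∧ U i ω = Z i ω}) :
    IsStoppingTime ℱ (fun ω => (τstar ω : WithTop ℕ)) ∧
    (∫ ω, Z (τstar ω) ω ∂μ) = (∫ ω, U 0 ω ∂μ) ∧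
    (∀ τ : Ω → ℕ, IsStoppingTime ℱ (fun ω => (τ ω : WithTop ℕ)) → (∀ ω, τ ω ≤ N) →
      (∫ ω, Z (τ ω) ω ∂μ) ≤ ∫ ω, U 0 ω ∂μ) := by
  have hU : IsSnellEnvelope μ ℱ N Z U := ⟨hUN, hUrec⟩
  subst hτstar
  exact ⟨hU.isStoppingTime_snellStoppingTime hadapt,
    hU.integral_snellStoppingTime hadapt hint,
    fun τ hτ hτN => hU.integral_stoppedValue_le hadapt hint hτ hτN⟩
end
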